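/- arXiv:1110.1779 — 3 statements merged into one kernel-verified Lean document; each statement's English description precedes it below -/
import Mathlib

section
/- At the interior Nash equilibrium of the communal-demand pricing game, the ISP's revenue equals U1* = D_max^2/(9d), which is independent of the side payment p_s; in particular, the derivative of U1* with respect to p_s is zero, so the ISP does not profit from the introduction of side payments. -/
/-! The side payment cancels both in the ISP's effective price `p₁* + p_s = D_max/(3d)` and in the
total price `p₁* + p₂* = 2 D_max/(3d)`, so the equilibrium revenue is a constant function of `p_s`. -/

theorem isp_equilibrium_revenue_eq {Dmax d : ℝ} (hd : d ≠ 0) (p_s : ℝ) :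
    ((Dmax / (3 * d) - p_s) + p_s) *
        (Dmax - d * ((Dmax / (3 * d) - p_s) + (Dmax / (3 * d) + p_s))) = Dmax ^ 2 / (9 * d) := by
  field_simp
  ring

theorem stmt_1_general (Dmax d : ℝ) (hd : 0 < d)
    (U1star : ℝ → ℝ)
    (hU1star : ∀ p_s : ℝ,
      U1star p_s = ((Dmax / (3 * d) - p_s) + p_s) *
        (Dmax - d * ((Dmax / (3 * d) - p_s) + (Dmax / (3 * d) + p_s)))) :
    (∀ p_s : ℝ, U1star p_s = Dmax ^ 2 / (9 * d)) ∧
    (∀ p_s : ℝ, deriv U1star p_s = 0) := by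
  have hconst : ∀ p_s, U1star p_s = Dmax ^ 2 / (9 * d) := fun p_s =>
    (hU1star p_s).trans (isp_equilibrium_revenue_eq hd.ne' p_s)
  refine ⟨hconst, fun p_s => ?_⟩
  rw [funext hconst, deriv_const]

/-- At the interior Nash equilibrium, the ISP's revenue equals D_max^2/(9d),
independent of the side payment p_s; in particular its derivative in p_s is zero. -/
theorem stmt_1 (Dmax d : ℝ) (hD : 0 < Dmax) (hd : 0 < d)
    (U1star : ℝ → ℝ)
    (hU1star : ∀ p_s : ℝ,
      U1star p_s = ((Dmax / (3 * d) - p_s) + p_s) *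
        (Dmax - d * ((Dmax / (3 * d) - p_s) + (Dmax / (3 * d) + p_s)))) :
    (∀ p_s : ℝ, U1star p_s = Dmax ^ 2 / (9 * d)) ∧
    (∀ p_s : ℝ, deriv U1star p_s = 0) :=
  stmt_1_general Dmax d hd U1star hU1star
end

section
/- In the game with type-dependent demands and bandwidth-based side payments, if (p1*, p2*) satisfies the first-order conditions ∂U1/∂p1 = 0 and ∂U2/∂p2 = 0, then the total equilibrium price is p* = p1* + p2* = (1/3)(δ1 - p_s + δ2 + (d1/d2)p_s), where δk = D_max,k/d_k, and p1* + p_s = δ1 - p*. -/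
/-! Both utilities are quadratic in the player's own price, so the first-order conditions are
linear: dividing them by `d1` and `d2` gives `p1 + p_s = δ1 - p*` and
`p2 = δ2 + (d1 / d2) p_s - p*`, and adding these two identities gives
`3 p* = δ1 - p_s + δ2 + (d1 / d2) p_s`. -/

theorem hasDerivAt_mul_linear_demand (a D d b x : ℝ) :
    HasDerivAt (fun x : ℝ => (x + a) * (D - d * (x + b))) (D - d * (x + b) - d * (x + a)) x := by
  refine (((hasDerivAt_id' x).add_const a).mul
    ((hasDerivAt_id' x).add_const b |>.const_mul d |>.const_sub D)).congr_deriv ?_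
  ring

theorem hasDerivAt_mul_linear_demand_sub_side_payment (D₁ D₂ d₁ d₂ p_s p₁ y : ℝ) :
    HasDerivAt (fun y : ℝ => y * (D₂ - d₂ * (p₁ + y)) - p_s * (D₁ - d₁ * (p₁ + y)))
      (D₂ - d₂ * (p₁ + y) - d₂ * y + d₁ * p_s) y := by
  have hdemand (D d : ℝ) : HasDerivAt (fun y : ℝ => D - d * (p₁ + y)) (-d) y := by
    simpa using ((hasDerivAt_id' y).const_add p₁ |>.const_mul d |>.const_sub D)
  refine (((hasDerivAt_id' y).mul (hdemand D₂ d₂)).sub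
    ((hdemand D₁ d₁).const_mul p_s)).congr_deriv ?_
  ring

theorem total_price_of_first_order_conditions {D₁ D₂ d₁ d₂ p_s p₁ p₂ : ℝ}
    (hd₁ : d₁ ≠ 0) (hd₂ : d₂ ≠ 0)
    (foc₁ : D₁ - d₁ * (p₁ + p₂) - d₁ * (p₁ + p_s) = 0)
    (foc₂ : D₂ - d₂ * (p₁ + p₂) - d₂ * p₂ + d₁ * p_s = 0) :
    p₁ + p₂ = (1 / 3) * (D₁ / d₁ - p_s + D₂ / d₂ + (d₁ / d₂) * p_s) ∧
    p₁ + p_s = D₁ / d₁ - (p₁ + p₂) := by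
  constructor
  · field_simp
    linear_combination (-d₂) * foc₁ + (-d₁) * foc₂
  · field_simp
    linear_combination -foc₁

theorem stmt_3_general (Dmax1 Dmax2 d1 d2 p_s : ℝ)
    (hd1 : 0 < d1) (hd2 : 0 < d2)
    (p1 p2 : ℝ)
    (hFOC1 : deriv (fun x : ℝ => (x + p_s) * (Dmax1 - d1 * (x + p2))) p1 = 0)
    (hFOC2 : deriv (fun y : ℝ =>
      y * (Dmax2 - d2 * (p1 + y)) - p_s * (Dmax1 - d1 * (p1 + y))) p2 = 0) :
    p1 + p2 = (1 / 3) * (Dmax1 / d1 - p_s + Dmax2 / d2 + (d1 / d2) * p_s) ∧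
    p1 + p_s = Dmax1 / d1 - (p1 + p2) := by
  rw [(hasDerivAt_mul_linear_demand p_s Dmax1 d1 p2 p1).deriv] at hFOC1
  rw [(hasDerivAt_mul_linear_demand_sub_side_payment Dmax1 Dmax2 d1 d2 p_s p1 p2).deriv] at hFOC2
  exact total_price_of_first_order_conditions hd1.ne' hd2.ne' hFOC1 hFOC2

/-- In the game with type-dependent demands and bandwidth-based side payments,
the first-order conditions imply the closed form for the total equilibrium price
p* = (1/3)(δ1 - p_s + δ2 + (d1/d2) p_s), and p1* + p_s = δ1 - p*. -/
theorem stmt_3 (Dmax1 Dmax2 d1 d2 p_s : ℝ)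
    (hD1 : 0 < Dmax1) (hD2 : 0 < Dmax2) (hd1 : 0 < d1) (hd2 : 0 < d2)
    (p1 p2 : ℝ)
    (hFOC1 : deriv (fun x : ℝ => (x + p_s) * (Dmax1 - d1 * (x + p2))) p1 = 0)
    (hFOC2 : deriv (fun y : ℝ =>
      y * (Dmax2 - d2 * (p1 + y)) - p_s * (Dmax1 - d1 * (p1 + y))) p2 = 0) :
    p1 + p2 = (1 / 3) * (Dmax1 / d1 - p_s + Dmax2 / d2 + (d1 / d2) * p_s) ∧
    p1 + p_s = Dmax1 / d1 - (p1 + p2) :=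
  stmt_3_general Dmax1 Dmax2 d1 d2 p_s hd1 hd2 p1 p2 hFOC1 hFOC2
end

section
/- At the interior Nash equilibrium of the game with type-dependent demands and bandwidth-based side payments, the ISP's revenue is U1* = (d1/9)(2δ1 - δ2 + (1 - d1/d2)p_s)^2, where δk = D_max,k/d_k, and hence ∂U1*/∂p_s = (2d1/9)(1 - d1/d2)(2δ1 - δ2 + (1 - d1/d2)p_s). -/
/-! The equilibrium margin `δ1 - p*` of the ISP is a third of `2δ1 - δ2 + (1 - d1/d2) p_s`,
and its demand is `D1 = d1 (δ1 - p*)`, so the revenue `(δ1 - p*) D1` is `d1 (δ1 - p*)²`. -/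

lemma sub_equilibrium_price {δ₁ δ₂ r pₛ p : ℝ}
    (hp : p = (1 / 3) * (δ₁ - pₛ + δ₂ + r * pₛ)) :
    δ₁ - p = (1 / 3) * (2 * δ₁ - δ₂ + (1 - r) * pₛ) := by
  rw [hp]; ring

lemma sub_mul_sub_mul_eq_mul_sq {D d : ℝ} (hd : d ≠ 0) (p : ℝ) :
    (D / d - p) * (D - d * p) = d * (D / d - p) ^ 2 := by
  have hD : D = d * (D / d) := (mul_div_cancel₀ D hd).symm
  nth_rw 2 [hD]
  ring

lemma hasDerivAt_const_mul_affine_sq (c a b x : ℝ) :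
    HasDerivAt (fun s : ℝ => c * (a + b * s) ^ 2) (2 * c * b * (a + b * x)) x := by
  have h := (((hasDerivAt_id' x).const_mul b).const_add a).fun_pow 2 |>.const_mul c
  exact h.congr_deriv (by norm_num; ring)

theorem stmt_4_general (Dmax1 Dmax2 d1 d2 : ℝ)
    (hd1 : 0 < d1) :
    (∀ p_s p1 p2 : ℝ,
      p1 + p2 = (1 / 3) * (Dmax1 / d1 - p_s + Dmax2 / d2 + (d1 / d2) * p_s) →
      p1 + p_s = Dmax1 / d1 - (p1 + p2) →
      (p1 + p_s) * (Dmax1 - d1 * (p1 + p2)) =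
        (d1 / 9) * (2 * (Dmax1 / d1) - Dmax2 / d2 + (1 - d1 / d2) * p_s) ^ 2) ∧
    (∀ p_s : ℝ,
      deriv (fun s : ℝ =>
        (d1 / 9) * (2 * (Dmax1 / d1) - Dmax2 / d2 + (1 - d1 / d2) * s) ^ 2) p_s =
      (2 * d1 / 9) * (1 - d1 / d2) *
        (2 * (Dmax1 / d1) - Dmax2 / d2 + (1 - d1 / d2) * p_s)) := by
  refine ⟨fun p_s p1 p2 hp hmargin => ?_, fun p_s => ?_⟩
  · rw [hmargin, sub_mul_sub_mul_eq_mul_sq hd1.ne', sub_equilibrium_price hp]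
    ring
  · rw [(hasDerivAt_const_mul_affine_sq _ _ _ p_s).deriv]
    ring

/-- At the interior Nash equilibrium with bandwidth-based side payments, the
ISP's revenue is U1* = (d1/9)(2δ1 - δ2 + (1 - d1/d2) p_s)^2, and hence
∂U1*/∂p_s = (2 d1/9)(1 - d1/d2)(2δ1 - δ2 + (1 - d1/d2) p_s). -/
theorem stmt_4 (Dmax1 Dmax2 d1 d2 : ℝ)
    (hD1 : 0 < Dmax1) (hD2 : 0 < Dmax2) (hd1 : 0 < d1) (hd2 : 0 < d2) :
    (∀ p_s p1 p2 : ℝ,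
      p1 + p2 = (1 / 3) * (Dmax1 / d1 - p_s + Dmax2 / d2 + (d1 / d2) * p_s) →
      p1 + p_s = Dmax1 / d1 - (p1 + p2) →
      (p1 + p_s) * (Dmax1 - d1 * (p1 + p2)) =
        (d1 / 9) * (2 * (Dmax1 / d1) - Dmax2 / d2 + (1 - d1 / d2) * p_s) ^ 2) ∧
    (∀ p_s : ℝ,
      deriv (fun s : ℝ =>
        (d1 / 9) * (2 * (Dmax1 / d1) - Dmax2 / d2 + (1 - d1 / d2) * s) ^ 2) p_s =
      (2 * d1 / 9) * (1 - d1 / d2) *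
        (2 * (Dmax1 / d1) - Dmax2 / d2 + (1 - d1 / d2) * p_s)) :=
  stmt_4_general Dmax1 Dmax2 d1 d2 hd1
end
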